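/- Let x, y belong to a hypercomplex subspace M of a real alternative *-algebra A (so that t(x y^c) ∈ ℝ and n(x y^c) = n(x)n(y) ∈ ℝ). Then x y^c belongs to the quadratic cone Q_A of A. -/

import Mathlib

/-- The quadratic cone of a real *-algebra `A`. -/
def quadCone (A : Type*) [NonAssocRing A] [Module ℝ A] [Star A] : Set A :=
  {x | (∃ r : ℝ, x = r • (1 : A)) ∨
    ∃ r s : ℝ, x + star x = r • (1 : A) ∧ x * star x = s • (1 : A) ∧ r ^ 2 < 4 * s}

/-! By Cauchy–Schwarz, `t(x yᶜ)² = 4 ⟪x, y⟫² ≤ 4 n(x) n(y) = 4 n(x yᶜ)`. A strict inequality is the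
defining condition of the non-real part of `Q_A`. In the equality case `x` and `y` are proportional,
so `x yᶜ` is a real multiple of `x xᶜ = n(x)`, which is real. -/

namespace LinearMap.BilinForm

variable {R M : Type*} [CommRing R] [AddCommGroup M] [Module R M]

theorem smul_eq_smul_of_apply_sq_eq (B : LinearMap.BilinForm R M) (hB : LinearMap.IsSymm B)
    (hdef : ∀ z, B z z = 0 → z = 0) {x y : M} (h : B x y ^ 2 = B x x * B y y) :
    B x x • y = B x y • x := by
  have hz : B (B x y • x - B x x • y) (B x y • x - B x x • y) = 0 := by
    rw [apply_smul_sub_smul_sub_eq, ← hB.eq x y, RingHom.id_apply, ← sq, h, sub_self, mul_zero]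
  exact (sub_eq_zero.mp (hdef _ hz)).symm

end LinearMap.BilinForm

theorem mul_star_eq_smul_one_of_smul_eq_smul {K A : Type*} [Field K] [StarRing K] [TrivialStar K]
    [NonAssocRing A] [StarRing A] [Module K A] [SMulCommClass K A A] [StarModule K A]
    {x y : A} {a b n : K} (ha : a ≠ 0) (hxy : a • y = b • x) (hx : x * star x = n • 1) :
    x * star y = (a⁻¹ * (b * n)) • 1 := by
  have : a • (x * star y) = (b * n) • 1 := by
    rw [← mul_smul_comm, ← star_trivial a, ← star_smul, hxy, star_smul, star_trivial,
      mul_smul_comm, hx, smul_smul]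
  rw [← smul_smul, ← this, inv_smul_smul₀ ha]

theorem mul_conj_mem_quadCone {A : Type*} [NonAssocRing A]
    [Module ℝ A] [SMulCommClass ℝ A A]
    [StarRing A] [StarModule ℝ A]
    (inn : A →ₗ[ℝ] A →ₗ[ℝ] ℝ)
    (hsymm : ∀ x y : A, inn x y = inn y x)
    (hpos : ∀ x : A, 0 ≤ inn x x)
    (hdef : ∀ x : A, inn x x = 0 → x = 0)
    (M : Submodule ℝ A)
    (hnorm : ∀ x ∈ M, (inn x x) • (1 : A) = x * star x)
    (htr : ∀ x ∈ M, ∀ y ∈ M,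
      x * star y + star (x * star y) = (2 * inn x y) • (1 : A))
    (hnmul : ∀ x ∈ M, ∀ y ∈ M,
      (x * star y) * star (x * star y) = (inn x x * inn y y) • (1 : A)) :
    ∀ x ∈ M, ∀ y ∈ M, x * star y ∈ quadCone A := by
  intro x hx y hy
  have hB : inn.IsSymm := LinearMap.isSymm_def.mpr fun x y ↦ hsymm x y
  rcases (LinearMap.BilinForm.apply_sq_le_of_symm inn hpos hB x y).lt_or_eq with hlt | heq
  · exact Or.inr ⟨_, _, htr x hx y hy, hnmul x hx y hy, by linarith⟩
  · left
    by_cases hx0 : inn x x = 0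
    · exact ⟨0, by rw [hdef x hx0, zero_mul, zero_smul]⟩
    · exact ⟨_, mul_star_eq_smul_one_of_smul_eq_smul hx0
        (LinearMap.BilinForm.smul_eq_smul_of_apply_sq_eq inn hB hdef heq) (hnorm x hx).symm⟩
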